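/- arXiv:2103.11567 — 4 statements merged into one kernel-verified Lean document; each statement's English description precedes it below -/
import Mathlib

section
/- Let (T, μ) be a finite measure space, g : T → ℝ an integrable function, and m : T → ℝ^p a measurable map with t ↦ ‖m(t)‖² integrable. Let Σ_x be a symmetric positive definite p×p real matrix, and define Σ_xy := ∫_T m(t) m(t)ᵀ dμ(t) (a Bochner integral in the space of p×p real matrices). If w₀ ∈ ℝ^p, w₀ ≠ 0, minimizes the function w ↦ ∫_T ( g(t) − (⟨m(t), w⟩)² / (wᵀ Σ_x w) ) dμ(t) over all nonzero w ∈ ℝ^p, then w₀ maximizes the generalized Rayleigh quotient w ↦ (wᵀ Σ_xy w) / (wᵀ Σ_x w) over all nonzero w ∈ ℝ^p. -/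
open MeasureTheory Matrix

/-! Expanding the square, `∫ ⟨m(t), w⟩² dμ = wᵀ Σ_xy w`, so the integrated residual sum of squares
at `w` equals `∫ g dμ − (wᵀ Σ_xy w)/(wᵀ Σ_x w)`: minimizing it is maximizing the Rayleigh
quotient. -/

theorem sq_dotProduct_eq_dotProduct_vecMulVec_mulVec {ι R : Type*} [Fintype ι] [CommSemiring R]
    (x v : ι → R) :
    (x ⬝ᵥ v) ^ 2 = v ⬝ᵥ vecMulVec x x *ᵥ v := by
  rw [vecMulVec_mulVec, dotProduct_smul, op_smul_eq_mul, dotProduct_comm v x, sq]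

section

variable {T ι : Type*} [MeasurableSpace T] {μ : Measure T} [Fintype ι]

theorem integrable_mul_apply_of_integrable_sum_sq {m : T → ι → ℝ} (hm : Measurable m)
    (hm2 : Integrable (fun t => ∑ k, m t k ^ 2) μ) (i j : ι) :
    Integrable (fun t => m t i * m t j) μ := by
  refine hm2.mono' (hm.eval.mul hm.eval).aestronglyMeasurable (.of_forall fun t => ?_)
  have hsq : ∀ k, m t k ^ 2 ≤ ∑ k, m t k ^ 2 := fun k =>
    Finset.single_le_sum (f := fun k => m t k ^ 2) (fun k _ => sq_nonneg _) (Finset.mem_univ k)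
  have hamgm := two_mul_le_add_sq |m t i| |m t j|
  rw [sq_abs, sq_abs] at hamgm
  rw [Real.norm_eq_abs, abs_mul]
  linarith [hsq i, hsq j]

theorem integrable_dotProduct_mulVec {M : T → Matrix ι ι ℝ}
    (hM : ∀ i j, Integrable (fun t => M t i j) μ) (u v : ι → ℝ) :
    Integrable (fun t => u ⬝ᵥ M t *ᵥ v) μ := by
  simp only [dotProduct, mulVec, Finset.mul_sum]
  exact integrable_finsetSum _ fun i _ =>
    integrable_finsetSum _ fun j _ => ((hM i j).mul_const _).const_mul _

theorem integral_dotProduct_mulVec {M : T → Matrix ι ι ℝ}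
    (hM : ∀ i j, Integrable (fun t => M t i j) μ) (u v : ι → ℝ) :
    ∫ t, u ⬝ᵥ M t *ᵥ v ∂μ = u ⬝ᵥ (fun i j => ∫ t, M t i j ∂μ : Matrix ι ι ℝ) *ᵥ v := by
  simp only [dotProduct, mulVec, Finset.mul_sum]
  rw [integral_finsetSum _ fun i _ =>
    integrable_finsetSum _ fun j _ => ((hM i j).mul_const _).const_mul _]
  refine Finset.sum_congr rfl fun i _ => ?_
  rw [integral_finsetSum _ fun j _ => ((hM i j).mul_const _).const_mul _]
  refine Finset.sum_congr rfl fun j _ => ?_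
  rw [integral_const_mul, integral_mul_const]

end

theorem stmt2_general
    {T : Type*} [MeasurableSpace T] (μ : Measure T)
    (p : ℕ) (g : T → ℝ) (hg : Integrable g μ)
    (m : T → (Fin p → ℝ)) (hm : Measurable m)
    (hm2 : Integrable (fun t => ∑ i, (m t i) ^ 2) μ)
    (Sx : Matrix (Fin p) (Fin p) ℝ)
    (Sxy : Matrix (Fin p) (Fin p) ℝ)
    (hSxy : Sxy = fun i j => ∫ t, m t i * m t j ∂μ)
    (w₀ : Fin p → ℝ)
    (hmin : ∀ w : Fin p → ℝ, w ≠ 0 →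
      (∫ t, (g t - (m t ⬝ᵥ w₀) ^ 2 / (w₀ ⬝ᵥ Sx *ᵥ w₀)) ∂μ)
        ≤ ∫ t, (g t - (m t ⬝ᵥ w) ^ 2 / (w ⬝ᵥ Sx *ᵥ w)) ∂μ) :
    ∀ w : Fin p → ℝ, w ≠ 0 →
      (w ⬝ᵥ Sxy *ᵥ w) / (w ⬝ᵥ Sx *ᵥ w) ≤ (w₀ ⬝ᵥ Sxy *ᵥ w₀) / (w₀ ⬝ᵥ Sx *ᵥ w₀) := by
  have hentries : ∀ i j, Integrable (fun t => vecMulVec (m t) (m t) i j) μ :=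
    integrable_mul_apply_of_integrable_sum_sq hm hm2
  have hproj : ∀ v, Integrable (fun t => (m t ⬝ᵥ v) ^ 2) μ := fun v => by
    simpa only [sq_dotProduct_eq_dotProduct_vecMulVec_mulVec] using
      integrable_dotProduct_mulVec hentries v v
  have hquad : ∀ v, ∫ t, (m t ⬝ᵥ v) ^ 2 ∂μ = v ⬝ᵥ Sxy *ᵥ v := fun v => by
    simp only [sq_dotProduct_eq_dotProduct_vecMulVec_mulVec]
    rw [integral_dotProduct_mulVec hentries, hSxy]
    rfl
  have hrss : ∀ v, ∫ t, (g t - (m t ⬝ᵥ v) ^ 2 / (v ⬝ᵥ Sx *ᵥ v)) ∂μ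
      = ∫ t, g t ∂μ - (v ⬝ᵥ Sxy *ᵥ v) / (v ⬝ᵥ Sx *ᵥ v) := fun v => by
    rw [integral_sub hg ((hproj v).div_const _), integral_div, hquad]
  intro w hw
  linarith [hmin w hw, hrss w, hrss w₀]

/-- Proposition 1, deterministic form: if `w₀ ≠ 0` minimizes the
integrated residual sum of squares
`w ↦ ∫_T (g(t) − ⟨m(t),w⟩²/(wᵀΣ_x w)) dμ(t)` over nonzero `w`, then `w₀`
maximizes the generalized Rayleigh quotient `w ↦ (wᵀ Σ_xy w)/(wᵀ Σ_x w)` over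
nonzero `w`, where `Σ_xy = ∫_T m(t) m(t)ᵀ dμ(t)` (entrywise Bochner integral). -/
theorem stmt2
    {T : Type*} [MeasurableSpace T] (μ : Measure T) [IsFiniteMeasure μ]
    (p : ℕ) (g : T → ℝ) (hg : Integrable g μ)
    (m : T → (Fin p → ℝ)) (hm : Measurable m)
    (hm2 : Integrable (fun t => ∑ i, (m t i) ^ 2) μ)
    (Sx : Matrix (Fin p) (Fin p) ℝ) (hSx : Sx.PosDef)
    (Sxy : Matrix (Fin p) (Fin p) ℝ)
    (hSxy : Sxy = fun i j => ∫ t, m t i * m t j ∂μ)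
    (w₀ : Fin p → ℝ) (hw₀ : w₀ ≠ 0)
    (hmin : ∀ w : Fin p → ℝ, w ≠ 0 →
      (∫ t, (g t - (m t ⬝ᵥ w₀) ^ 2 / (w₀ ⬝ᵥ Sx *ᵥ w₀)) ∂μ)
        ≤ ∫ t, (g t - (m t ⬝ᵥ w) ^ 2 / (w ⬝ᵥ Sx *ᵥ w)) ∂μ) :
    ∀ w : Fin p → ℝ, w ≠ 0 →
      (w ⬝ᵥ Sxy *ᵥ w) / (w ⬝ᵥ Sx *ᵥ w) ≤ (w₀ ⬝ᵥ Sxy *ᵥ w₀) / (w₀ ⬝ᵥ Sx *ᵥ w₀) :=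
  stmt2_general μ p g hg m hm hm2 Sx Sxy hSxy w₀ hmin
end

section
/- (Equivalence) Let p > K ≥ 1, let Σ_x be a symmetric positive definite p×p real matrix, and let Σ_xy be a symmetric positive semidefinite p×p real matrix of rank K admitting the decomposition Σ_xy = U D Uᵀ, where U ∈ ℝ^{p×K} has orthonormal columns and D is a K×K diagonal matrix with strictly positive diagonal entries. Let W = (w₁, …, w_K) ∈ ℝ^{p×K} be such that for each k = 1, …, K, the column w_k satisfies w_kᵀ Σ_x w_k = 1 and w_kᵀ Σ_x w_j = 0 for all j < k, and w_k maximizes w ↦ wᵀ Σ_xy w over { w ∈ ℝ^p : wᵀ Σ_x w = 1, wᵀ Σ_x w_j = 0 for j < k }. Let V* := Σ_x^{-1} U. Then the linear span of the columns of V* equals the linear span of the columns of W. -/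
/-!
Write `B(v, w) = vᵀ Σ_x w`. Since `B(Σ_x⁻¹ U y, w) = yᵀ Uᵀ w`, the range of `V* = Σ_x⁻¹ U` is the
`B`-orthogonal complement of `ker Uᵀ`, and `wᵀ Σ_xy w = (Uᵀ w)ᵀ D (Uᵀ w)` only depends on `Uᵀ w`.
Suppose `w_1, …, w_{k-1}` lie in that range and split `w_k = a + b` with `a` in the range and
`b ∈ ker Uᵀ`. Then `a` meets the same orthogonality constraints, has the same objective value, and
`B(a, a) = 1 - B(b, b)`. The optimal value is positive (fewer than `K` constraints leave a nonzero
direction in the range, where the objective is positive definite), so rescaling `a` to `B`-norm one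
would beat `w_k` unless `b = 0`. Hence all `w_k` lie in the `K`-dimensional range, and being
`B`-orthonormal they span it.
-/

open Matrix

namespace Matrix

lemma PosDef.transpose_eq {n : Type*} {A : Matrix n n ℝ} (hA : A.PosDef) : Aᵀ = A := by
  simpa using hA.isHermitian.eq

variable {n m ι : Type*} [Fintype n] [Fintype m]

lemma smul_dotProduct_mulVec_smul (M : Matrix n n ℝ) (t : ℝ) (w : n → ℝ) :
    (t • w) ⬝ᵥ M *ᵥ (t • w) = t ^ 2 * (w ⬝ᵥ M *ᵥ w) := by
  rw [mulVec_smul, smul_dotProduct, dotProduct_smul, smul_eq_mul, smul_eq_mul]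
  ring

lemma PosDef.dotProduct_mulVec_comm {A : Matrix n n ℝ} (hA : A.PosDef) (x y : n → ℝ) :
    x ⬝ᵥ A *ᵥ y = y ⬝ᵥ A *ᵥ x := by
  rw [dotProduct_mulVec, ← mulVec_transpose, hA.transpose_eq, dotProduct_comm]

lemma PosDef.dotProduct_mulVec_le_mul_of_forall_smul
    {A : Matrix n n ℝ} (hA : A.PosDef) (M : Matrix n n ℝ) {u : n → ℝ} {c : ℝ}
    (h : ∀ t : ℝ, (t • u) ⬝ᵥ A *ᵥ (t • u) = 1 → (t • u) ⬝ᵥ M *ᵥ (t • u) ≤ c) :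
    u ⬝ᵥ M *ᵥ u ≤ c * (u ⬝ᵥ A *ᵥ u) := by
  rcases eq_or_ne u 0 with rfl | hu
  · simp
  have hpos : 0 < u ⬝ᵥ A *ᵥ u := by simpa using hA.dotProduct_mulVec_pos hu
  have hsq : (Real.sqrt (u ⬝ᵥ A *ᵥ u))⁻¹ ^ 2 = (u ⬝ᵥ A *ᵥ u)⁻¹ := by
    rw [inv_pow, Real.sq_sqrt hpos.le]
  have := h (Real.sqrt (u ⬝ᵥ A *ᵥ u))⁻¹
  rw [smul_dotProduct_mulVec_smul, smul_dotProduct_mulVec_smul, hsq,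
    inv_mul_cancel₀ hpos.ne', inv_mul_le_iff₀ hpos] at this
  linarith [this rfl]

lemma exists_ne_zero_mulVec_eq_zero_of_card_lt [Fintype ι] [DecidableEq m] (A : Matrix ι m ℝ)
    (h : Fintype.card ι < Fintype.card m) : ∃ y ≠ 0, A *ᵥ y = 0 := by
  have hker : LinearMap.ker A.mulVecLin ≠ ⊥ :=
    LinearMap.ker_ne_bot_of_finrank_lt (by simpa using h)
  obtain ⟨y, hy, hy0⟩ := Submodule.exists_mem_ne_zero_of_ne_bot hker
  exact ⟨y, hy0, hy⟩

lemma dotProduct_mul_mul_transpose_mulVec (U : Matrix n m ℝ) (D : Matrix m m ℝ) (w : n → ℝ) :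
    w ⬝ᵥ (U * D * Uᵀ) *ᵥ w = (Uᵀ *ᵥ w) ⬝ᵥ D *ᵥ (Uᵀ *ᵥ w) := by
  rw [← mulVec_mulVec, ← mulVec_mulVec, dotProduct_mulVec, ← mulVec_transpose]

variable [DecidableEq n] {Sx : Matrix n n ℝ} {U : Matrix n m ℝ}

lemma linearIndependent_of_pairwise_dotProduct_mulVec_eq_zero (A : Matrix n n ℝ)
    {v : ι → n → ℝ} (horth : Pairwise fun i j ↦ v i ⬝ᵥ A *ᵥ v j = 0)
    (hv : ∀ i, v i ⬝ᵥ A *ᵥ v i ≠ 0) : LinearIndependent ℝ v :=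
  LinearMap.BilinForm.linearIndependent_of_iIsOrtho (B := toBilin' A)
    (by simpa [LinearMap.BilinForm.iIsOrtho_def, toBilin'_apply'] using fun i j ↦ @horth i j)
    (by simpa [toBilin'_apply'] using hv)

lemma PosDef.inv_mul_mulVec_dotProduct_mulVec (hSx : Sx.PosDef) (U : Matrix n m ℝ)
    (y : m → ℝ) (w : n → ℝ) : ((Sx⁻¹ * U) *ᵥ y) ⬝ᵥ Sx *ᵥ w = y ⬝ᵥ Uᵀ *ᵥ w := by
  rw [hSx.dotProduct_mulVec_comm, mulVec_mulVec, ← Matrix.mul_assoc,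
    mul_nonsing_inv _ hSx.det_pos.ne'.isUnit, Matrix.one_mul, dotProduct_mulVec,
    ← mulVec_transpose, dotProduct_comm]

lemma PosDef.transpose_mul_inv_mul (hSx : Sx.PosDef) (hU : Function.Injective U.mulVec) :
    (Uᵀ * Sx⁻¹ * U).PosDef := by
  simpa using hSx.inv.conjTranspose_mul_mul_same hU

lemma PosDef.exists_transpose_mulVec_inv_mul_mulVec_eq [DecidableEq m] (hSx : Sx.PosDef)
    (hU : Function.Injective U.mulVec) (w : n → ℝ) :
    ∃ y, Uᵀ *ᵥ ((Sx⁻¹ * U) *ᵥ y) = Uᵀ *ᵥ w := by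
  obtain ⟨y, hy⟩ := mulVec_surjective_iff_isUnit.mpr (hSx.transpose_mul_inv_mul hU).isUnit
    (Uᵀ *ᵥ w)
  exact ⟨y, by rwa [mulVec_mulVec, ← Matrix.mul_assoc]⟩

lemma PosDef.dotProduct_mulVec_inv_mul_mulVec_pos [DecidableEq m] (hSx : Sx.PosDef)
    (hU : Function.Injective U.mulVec) {D : Matrix m m ℝ} (hD : D.PosDef) {y : m → ℝ}
    (hy : y ≠ 0) : 0 < ((Sx⁻¹ * U) *ᵥ y) ⬝ᵥ (U * D * Uᵀ) *ᵥ ((Sx⁻¹ * U) *ᵥ y) := by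
  have hGy : Uᵀ *ᵥ ((Sx⁻¹ * U) *ᵥ y) ≠ 0 := by
    rw [mulVec_mulVec, ← Matrix.mul_assoc]
    exact fun h ↦ hy (mulVec_injective_iff_isUnit.mpr (hSx.transpose_mul_inv_mul hU).isUnit
      (h.trans (mulVec_zero _).symm))
  rw [dotProduct_mul_mul_transpose_mulVec]
  simpa using hD.dotProduct_mulVec_pos hGy

lemma PosDef.pos_of_forall_le_mul [Fintype ι] [DecidableEq m] (hSx : Sx.PosDef)
    (hU : Function.Injective U.mulVec) {D : Matrix m m ℝ} (hD : D.PosDef)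
    (hcard : Fintype.card ι < Fintype.card m) (s : ι → n → ℝ) {c : ℝ}
    (hle : ∀ v, (∀ i, v ⬝ᵥ Sx *ᵥ s i = 0) →
      v ⬝ᵥ (U * D * Uᵀ) *ᵥ v ≤ c * (v ⬝ᵥ Sx *ᵥ v)) :
    0 < c := by
  obtain ⟨y, hy, hsy⟩ := exists_ne_zero_mulVec_eq_zero_of_card_lt (of fun i ↦ Uᵀ *ᵥ s i) hcard
  refine pos_of_mul_pos_left
    ((hSx.dotProduct_mulVec_inv_mul_mulVec_pos hU hD hy).trans_le (hle _ fun i ↦ ?_))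
    (hSx.posSemidef.dotProduct_mulVec_nonneg _)
  rw [hSx.inv_mul_mulVec_dotProduct_mulVec, dotProduct_comm]
  exact congrFun hsy i

lemma PosDef.mem_range_inv_mul_of_forall_le_mul [DecidableEq m] (hSx : Sx.PosDef)
    (hU : Function.Injective U.mulVec) (D : Matrix m m ℝ) {s : ι → n → ℝ}
    (hs : ∀ i, s i ∈ LinearMap.range (Sx⁻¹ * U).mulVecLin) {w : n → ℝ}
    (hw : w ⬝ᵥ Sx *ᵥ w = 1) (hws : ∀ i, w ⬝ᵥ Sx *ᵥ s i = 0)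
    (hQw : 0 < w ⬝ᵥ (U * D * Uᵀ) *ᵥ w)
    (hle : ∀ v, (∀ i, v ⬝ᵥ Sx *ᵥ s i = 0) →
      v ⬝ᵥ (U * D * Uᵀ) *ᵥ v ≤ (w ⬝ᵥ (U * D * Uᵀ) *ᵥ w) * (v ⬝ᵥ Sx *ᵥ v)) :
    w ∈ LinearMap.range (Sx⁻¹ * U).mulVecLin := by
  obtain ⟨y, hy⟩ := hSx.exists_transpose_mulVec_inv_mul_mulVec_eq hU w
  set a := (Sx⁻¹ * U) *ᵥ y
  set b := w - a
  have hb : Uᵀ *ᵥ b = 0 := by rw [mulVec_sub, hy, sub_self]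
  have hab : a ⬝ᵥ Sx *ᵥ b = 0 := by
    rw [hSx.inv_mul_mulVec_dotProduct_mulVec, hb, dotProduct_zero]
  have hbs : ∀ i, b ⬝ᵥ Sx *ᵥ s i = 0 := fun i ↦ by
    obtain ⟨z, hz⟩ := hs i
    rw [hSx.dotProduct_mulVec_comm, ← hz, mulVecLin_apply,
      hSx.inv_mul_mulVec_dotProduct_mulVec, hb, dotProduct_zero]
  have has : ∀ i, a ⬝ᵥ Sx *ᵥ s i = 0 := fun i ↦ by
    rw [show a = w - b from (sub_sub_cancel w a).symm, sub_dotProduct, hws, hbs, sub_zero]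
  have hQa : a ⬝ᵥ (U * D * Uᵀ) *ᵥ a = w ⬝ᵥ (U * D * Uᵀ) *ᵥ w := by
    simp only [dotProduct_mul_mul_transpose_mulVec, hy]
  have hsplit : w ⬝ᵥ Sx *ᵥ w = a ⬝ᵥ Sx *ᵥ a + b ⬝ᵥ Sx *ᵥ b := by
    rw [show w = a + b from (add_sub_cancel a w).symm, mulVec_add, dotProduct_add,
      add_dotProduct, add_dotProduct, hab, hSx.dotProduct_mulVec_comm b a, hab]
    ring
  have hbb : b ⬝ᵥ Sx *ᵥ b ≤ 0 := by
    have := hle a has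
    rw [hQa] at this
    nlinarith
  have hb0 : b = 0 := by
    by_contra hb0
    exact hbb.not_gt (by simpa using hSx.dotProduct_mulVec_pos hb0)
  exact ⟨y, (sub_eq_zero.mp hb0).symm⟩

theorem PosDef.mem_range_inv_mul_of_forall_le [Fintype ι] [DecidableEq m] (hSx : Sx.PosDef)
    (hU : Function.Injective U.mulVec) {D : Matrix m m ℝ} (hD : D.PosDef)
    (hcard : Fintype.card ι < Fintype.card m) {s : ι → n → ℝ}
    (hs : ∀ i, s i ∈ LinearMap.range (Sx⁻¹ * U).mulVecLin) {w : n → ℝ}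
    (hw : w ⬝ᵥ Sx *ᵥ w = 1) (hws : ∀ i, w ⬝ᵥ Sx *ᵥ s i = 0)
    (hmax : ∀ v, v ⬝ᵥ Sx *ᵥ v = 1 → (∀ i, v ⬝ᵥ Sx *ᵥ s i = 0) →
      v ⬝ᵥ (U * D * Uᵀ) *ᵥ v ≤ w ⬝ᵥ (U * D * Uᵀ) *ᵥ w) :
    w ∈ LinearMap.range (Sx⁻¹ * U).mulVecLin := by
  have hle : ∀ v, (∀ i, v ⬝ᵥ Sx *ᵥ s i = 0) →
      v ⬝ᵥ (U * D * Uᵀ) *ᵥ v ≤ (w ⬝ᵥ (U * D * Uᵀ) *ᵥ w) * (v ⬝ᵥ Sx *ᵥ v) := fun v hv ↦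
    hSx.dotProduct_mulVec_le_mul_of_forall_smul _ fun t ht ↦
      hmax _ ht fun i ↦ by rw [smul_dotProduct, hv i, smul_zero]
  exact hSx.mem_range_inv_mul_of_forall_le_mul hU D hs hw hws
    (hSx.pos_of_forall_le_mul hU hD hcard s hle) hle

end Matrix

theorem stmt10_general
    (p K : ℕ)
    (Sx Sxy : Matrix (Fin p) (Fin p) ℝ) (hSx : Sx.PosDef)
    (U : Matrix (Fin p) (Fin K) ℝ) (hUorth : Uᵀ * U = 1)
    (d : Fin K → ℝ) (hd : ∀ k, 0 < d k)
    (hdecomp : Sxy = U * Matrix.diagonal d * Uᵀ)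
    (ws : Fin K → (Fin p → ℝ))
    (hnorm : ∀ k, ws k ⬝ᵥ Sx *ᵥ ws k = 1)
    (horth : ∀ k j : Fin K, j < k → ws k ⬝ᵥ Sx *ᵥ ws j = 0)
    (hmax : ∀ k : Fin K, ∀ w : Fin p → ℝ,
      w ⬝ᵥ Sx *ᵥ w = 1 → (∀ j : Fin K, j < k → w ⬝ᵥ Sx *ᵥ ws j = 0) →
        w ⬝ᵥ Sxy *ᵥ w ≤ ws k ⬝ᵥ Sxy *ᵥ ws k) :
    Submodule.span ℝ (Set.range (fun k : Fin K => (Sx⁻¹ * U)ᵀ k))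
      = Submodule.span ℝ (Set.range ws) := by
  subst hdecomp
  have hU : Function.Injective U.mulVec := fun x y h ↦ by
    simpa [mulVec_mulVec, hUorth] using congrArg (Uᵀ *ᵥ ·) h
  have hmem : ∀ k, ws k ∈ LinearMap.range (Sx⁻¹ * U).mulVecLin := by
    intro k
    induction k using WellFoundedLT.induction with
    | _ k ih =>
      exact hSx.mem_range_inv_mul_of_forall_le (ι := {j // j < k}) hU
        (posDef_diagonal_iff.mpr hd) (Fintype.card_subtype_lt (lt_irrefl k))
        (fun j ↦ ih j j.2) (hnorm k) (fun j ↦ horth k j j.2)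
        (fun v hv hvo ↦ hmax k v hv fun j hj ↦ hvo ⟨j, hj⟩)
  have hind : LinearIndependent ℝ ws :=
    linearIndependent_of_pairwise_dotProduct_mulVec_eq_zero Sx
      (fun i j hij ↦ hij.lt_or_gt.elim (fun h ↦ (hSx.dotProduct_mulVec_comm _ _).trans
        (horth j i h)) (horth i j)) (fun k ↦ by simp [hnorm k])
  have hle : Submodule.span ℝ (Set.range ws) ≤ LinearMap.range (Sx⁻¹ * U).mulVecLin :=
    Submodule.span_le.mpr (Set.range_subset_iff.mpr hmem)
  rw [← col_def, ← range_mulVecLin]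
  refine (Submodule.eq_of_le_of_finrank_le hle ?_).symm
  rw [finrank_span_eq_card hind]
  simpa using LinearMap.finrank_range_le (Sx⁻¹ * U).mulVecLin

/-- Theorem 1, Equivalence: let `Σ_xy = U D Uᵀ` be positive semidefinite
of rank `K < p` with `U` having orthonormal columns and `D` diagonal with strictly
positive diagonal entries. If the columns `ws 1, …, ws K` are the sequential supervised
principal component directions (generalized Rayleigh quotient maximizers with
`Σ_x`-orthonormality constraints), then the span of the columns of `V* = Σ_x⁻¹ U`
equals the span of `ws 1, …, ws K`. -/
theorem stmt10
    (p K : ℕ) (hK : 1 ≤ K) (hpK : K < p)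
    (Sx Sxy : Matrix (Fin p) (Fin p) ℝ) (hSx : Sx.PosDef)
    (hSxy : Sxy.PosSemidef) (hrank : Sxy.rank = K)
    (U : Matrix (Fin p) (Fin K) ℝ) (hUorth : Uᵀ * U = 1)
    (d : Fin K → ℝ) (hd : ∀ k, 0 < d k)
    (hdecomp : Sxy = U * Matrix.diagonal d * Uᵀ)
    (ws : Fin K → (Fin p → ℝ))
    (hnorm : ∀ k, ws k ⬝ᵥ Sx *ᵥ ws k = 1)
    (horth : ∀ k j : Fin K, j < k → ws k ⬝ᵥ Sx *ᵥ ws j = 0)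
    (hmax : ∀ k : Fin K, ∀ w : Fin p → ℝ,
      w ⬝ᵥ Sx *ᵥ w = 1 → (∀ j : Fin K, j < k → w ⬝ᵥ Sx *ᵥ ws j = 0) →
        w ⬝ᵥ Sxy *ᵥ w ≤ ws k ⬝ᵥ Sxy *ᵥ ws k) :
    Submodule.span ℝ (Set.range (fun k : Fin K => (Sx⁻¹ * U)ᵀ k))
      = Submodule.span ℝ (Set.range ws) :=
  stmt10_general p K Sx Sxy hSx U hUorth d hd hdecomp ws hnorm horth hmax
end

section
/- Let Σ̂ be a symmetric positive definite p×p real matrix with symmetric positive definite square root Σ̂^{1/2}, let Û ∈ ℝ^{p×K}, define L(V) := (1/2)‖Σ̂^{-1/2} Û − Σ̂^{1/2} V‖_F², and let λ > 0. Let V* ∈ ℝ^{p×K} have support S = { (i,j) : V*_{ij} ≠ 0 }, and assume ‖ Σ̂ V* − Û ‖_{∞,∞} ≤ λ/2. If V̂ is a global minimizer of V ↦ L(V) + λ ‖V‖_{1,1}, then the error Δ := V̂ − V* satisfies the cone condition ‖Δ_{Sᶜ}‖_{1,1} ≤ 3 ‖Δ_S‖_{1,1}. -/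
open Matrix

/-- The Frobenius norm of a real matrix. -/
noncomputable def frobNorm {p K : ℕ} (A : Matrix (Fin p) (Fin K) ℝ) : ℝ :=
  Real.sqrt (∑ i, ∑ j, (A i j) ^ 2)

/-- The elementwise ℓ₁ norm `‖A‖_{1,1} = ∑_{i,j} |A_{ij}|` of a real matrix. -/
def norm11 {p K : ℕ} (A : Matrix (Fin p) (Fin K) ℝ) : ℝ :=
  ∑ i, ∑ j, |A i j|

open Classical in
/-- `restrictM A E` agrees with `A` on the entries indexed by `E` and is zero elsewhere. -/
noncomputable def restrictM {p K : ℕ} (A : Matrix (Fin p) (Fin K) ℝ)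
    (E : Set (Fin p × Fin K)) : Matrix (Fin p) (Fin K) ℝ :=
  fun i j => if (i, j) ∈ E then A i j else 0

/-- cone condition: if `‖Σ̂ V* − Û‖_{∞,∞} ≤ λ/2` and `V̂` globally
minimizes `V ↦ L(V) + λ‖V‖_{1,1}` with `L(V) = (1/2)‖Σ̂^{-1/2} Û − Σ̂^{1/2} V‖_F²`, then
the error `Δ = V̂ − V*` satisfies `‖Δ_{Sᶜ}‖_{1,1} ≤ 3‖Δ_S‖_{1,1}`, where
`S = {(i,j) : V*_{ij} ≠ 0}`. Here `R` is the symmetric positive definite square root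
of `Σ̂`. -/
theorem stmt14
    (p K : ℕ) (Sh R : Matrix (Fin p) (Fin p) ℝ)
    (hSh : Sh.PosDef) (hR : R.PosDef) (hRR : R * R = Sh)
    (Uh : Matrix (Fin p) (Fin K) ℝ)
    (lam : ℝ) (hlam : 0 < lam)
    (Vstar : Matrix (Fin p) (Fin K) ℝ)
    (S : Set (Fin p × Fin K)) (hS : S = {q : Fin p × Fin K | Vstar q.1 q.2 ≠ 0})
    (hgrad : ∀ i j, |(Sh * Vstar - Uh) i j| ≤ lam / 2)
    (Vhat : Matrix (Fin p) (Fin K) ℝ)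
    (hmin : ∀ V : Matrix (Fin p) (Fin K) ℝ,
      (1 / 2) * (frobNorm (R⁻¹ * Uh - R * Vhat)) ^ 2 + lam * norm11 Vhat
        ≤ (1 / 2) * (frobNorm (R⁻¹ * Uh - R * V)) ^ 2 + lam * norm11 V) :
    norm11 (restrictM (Vhat - Vstar) Sᶜ) ≤ 3 * norm11 (restrictM (Vhat - Vstar) S) := by
  classical
  set Δ : Matrix (Fin p) (Fin K) ℝ := Vhat - Vstar with hΔdef
  have hF : ∀ A : Matrix (Fin p) (Fin K) ℝ, frobNorm A ^ 2 = ∑ i, ∑ j, (A i j)^2 := by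
    intro A
    rw [frobNorm, Real.sq_sqrt (by positivity)]
  have hdet : IsUnit R.det := isUnit_iff_ne_zero.mpr (ne_of_gt hR.det_pos)
  have hRsymm : Rᵀ = R := by
    have := hR.1
    simpa [Matrix.IsHermitian] using this
  set X := R⁻¹ * Uh - R * Vstar with hX
  have hkey : Rᵀ * X = -(Sh * Vstar - Uh) := by
    rw [hRsymm, hX, Matrix.mul_sub, ← Matrix.mul_assoc, Matrix.mul_nonsing_inv _ hdet,
      Matrix.one_mul, ← Matrix.mul_assoc, hRR, neg_sub]
  have hVhat : R⁻¹ * Uh - R * Vhat = X - R * Δ := by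
    rw [hX, hΔdef, Matrix.mul_sub]; abel
  have hexpand : ∀ i j, ((X - R*Δ) i j)^2
      = (X i j)^2 - 2*(X i j * ((R*Δ) i j)) + ((R*Δ) i j)^2 := fun i j => by
    simp [Matrix.sub_apply]; ring
  have hsum : ∑ i, ∑ j, ((X - R*Δ) i j)^2
      = (∑ i, ∑ j, (X i j)^2) - 2 * (∑ i, ∑ j, X i j * (R*Δ) i j)
        + ∑ i, ∑ j, ((R*Δ) i j)^2 := by
    simp only [hexpand, Finset.sum_add_distrib, Finset.sum_sub_distrib, Finset.mul_sum]
  have hip : ∑ i, ∑ j, X i j * (R*Δ) i j = ∑ i, ∑ j, (Rᵀ * X) i j * Δ i j := by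
    have e1 : (∑ i, ∑ j, X i j * (R*Δ) i j) = ∑ i, ∑ j, ∑ k, X i j * (R i k * Δ k j) := by
      simp only [Matrix.mul_apply, Finset.mul_sum]
    have e2 : (∑ i, ∑ j, (Rᵀ*X) i j * Δ i j) = ∑ i, ∑ j, ∑ k, X k j * (R k i * Δ i j) := by
      simp only [Matrix.mul_apply, Matrix.transpose_apply, Finset.sum_mul]
      exact Finset.sum_congr rfl fun i _ => Finset.sum_congr rfl fun j _ =>
        Finset.sum_congr rfl fun k _ => by ring
    rw [e1, e2]
    calc ∑ i, ∑ j, ∑ k, X i j * (R i k * Δ k j)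
        = ∑ i, ∑ k, ∑ j, X i j * (R i k * Δ k j) :=
          Finset.sum_congr rfl fun i _ => Finset.sum_comm
      _ = ∑ k, ∑ i, ∑ j, X i j * (R i k * Δ k j) := Finset.sum_comm
      _ = ∑ k, ∑ j, ∑ i, X i j * (R i k * Δ k j) :=
          Finset.sum_congr rfl fun k _ => Finset.sum_comm
  have hipG : ∑ i, ∑ j, X i j * (R*Δ) i j = ∑ i, ∑ j, -((Sh*Vstar - Uh) i j * Δ i j) := by
    rw [hip, hkey]
    simp only [Matrix.neg_apply, neg_mul]
  have hipbound : ∑ i, ∑ j, X i j * (R*Δ) i j ≤ lam/2 * norm11 Δ := by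
    rw [hipG, norm11, Finset.mul_sum]
    refine Finset.sum_le_sum fun i _ => ?_
    rw [Finset.mul_sum]
    refine Finset.sum_le_sum fun j _ => ?_
    have h1 := hgrad i j
    have h2 : -((Sh*Vstar - Uh) i j * Δ i j) ≤ |(Sh*Vstar - Uh) i j| * |Δ i j| := by
      calc -((Sh*Vstar - Uh) i j * Δ i j) ≤ |-((Sh*Vstar - Uh) i j * Δ i j)| := le_abs_self _
        _ = |(Sh*Vstar - Uh) i j| * |Δ i j| := by rw [abs_neg, abs_mul]
    calc -((Sh*Vstar - Uh) i j * Δ i j) ≤ |(Sh*Vstar - Uh) i j| * |Δ i j| := h2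
      _ ≤ lam/2 * |Δ i j| := mul_le_mul_of_nonneg_right h1 (abs_nonneg _)
  have hsq : (0:ℝ) ≤ ∑ i, ∑ j, ((R*Δ) i j)^2 := by positivity
  have h1 : lam * norm11 Vhat ≤ lam * norm11 Vstar + lam/2 * norm11 Δ := by
    have h := hmin Vstar
    rw [hF, hF, hVhat, hsum] at h
    nlinarith [hipbound]
  -- norm decompositions
  set a := norm11 (restrictM Δ S) with ha
  set b := norm11 (restrictM Δ Sᶜ) with hb
  have hsplit : norm11 Δ = a + b := by
    rw [ha, hb, norm11, norm11, norm11, ← Finset.sum_add_distrib]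
    refine Finset.sum_congr rfl fun i _ => ?_
    rw [← Finset.sum_add_distrib]
    refine Finset.sum_congr rfl fun j _ => ?_
    by_cases h : (i, j) ∈ S <;> simp [restrictM, h]
  have hlow : norm11 Vstar - a + b ≤ norm11 Vhat := by
    rw [ha, hb, norm11, norm11, norm11, norm11]
    have : ∀ i j, |Vstar i j| - |restrictM Δ S i j| + |restrictM Δ Sᶜ i j| ≤ |Vhat i j| := by
      intro i j
      by_cases h : (i, j) ∈ S
      · have hV : Vstar i j = Vhat i j - Δ i j := by simp [hΔdef]
        have hres1 : restrictM Δ S i j = Δ i j := by simp [restrictM, h]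
        have hres2 : restrictM Δ Sᶜ i j = 0 := by simp [restrictM, h]
        rw [hres1, hres2, hV]
        simp only [abs_zero, add_zero]
        have htri : |Vhat i j - Δ i j| ≤ |Vhat i j| + |Δ i j| := abs_sub _ _
        linarith
      · have hV0 : Vstar i j = 0 := by
          by_contra hne
          exact h (by rw [hS]; exact hne)
        have hV : Vhat i j = Δ i j := by simp [hΔdef, hV0]
        have hres1 : restrictM Δ S i j = 0 := by simp [restrictM, h]
        have hres2 : restrictM Δ Sᶜ i j = Δ i j := by simp [restrictM, h]
        rw [hres1, hres2, hV0, hV]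
        simp
    calc (∑ i, ∑ j, |Vstar i j|) - (∑ i, ∑ j, |restrictM Δ S i j|)
          + (∑ i, ∑ j, |restrictM Δ Sᶜ i j|)
        = ∑ i, ∑ j, (|Vstar i j| - |restrictM Δ S i j| + |restrictM Δ Sᶜ i j|) := by
          simp [Finset.sum_add_distrib, Finset.sum_sub_distrib]
      _ ≤ ∑ i, ∑ j, |Vhat i j| :=
          Finset.sum_le_sum fun i _ => Finset.sum_le_sum fun j _ => this i j
  have hfin : lam * (norm11 Vstar - a + b) ≤ lam * norm11 Vstar + lam/2 * (a + b) := by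
    calc lam * (norm11 Vstar - a + b) ≤ lam * norm11 Vhat :=
          mul_le_mul_of_nonneg_left hlow (le_of_lt hlam)
      _ ≤ lam * norm11 Vstar + lam/2 * norm11 Δ := h1
      _ = lam * norm11 Vstar + lam/2 * (a + b) := by rw [hsplit]
  nlinarith [hfin]
end

section
/- Let Σ̂ be a symmetric positive definite p×p real matrix with symmetric positive definite square root Σ̂^{1/2}, let Û ∈ ℝ^{p×K}, define the loss L(V) := (1/2)‖Σ̂^{-1/2} Û − Σ̂^{1/2} V‖_F², and let λ > 0. Let V* ∈ ℝ^{p×K} have support S = { (i,j) : V*_{ij} ≠ 0 } of size s ≥ 1, and assume ‖∇L(V*)‖_{∞,∞} = ‖ Σ̂ V* − Û ‖_{∞,∞} ≤ λ/2. Assume the restricted eigenvalue condition: there exists κ* > 0 such that tr(VᵀΣ̂V) ≥ κ* ‖V‖_{1,2}² for every V ∈ ℝ^{p×K} for which there exists an index set E ⊇ S with |E| ≤ 2s and ‖V_{Eᶜ}‖_{1,1} ≤ 3 ‖V_E‖_{1,1}. If V̂ is a global minimizer of V ↦ L(V) + λ ‖V‖_{1,1}, then ‖V̂ − V*‖_{1,2}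 ≤ 3 λ √s / (2 κ*). -/
open Matrix

/-- The `(1,2)` norm `‖A‖_{1,2} = ∑_j ( ∑_i A_{ij}² )^{1/2}`: the sum of the Euclidean
norms of the columns of `A`. -/
noncomputable def norm12 {p K : ℕ} (A : Matrix (Fin p) (Fin K) ℝ) : ℝ :=
  ∑ j, Real.sqrt (∑ i, (A i j) ^ 2)

/-- `restrictF A E` agrees with `A` on the entries indexed by the finite set `E` and is
zero elsewhere. -/
def restrictF {p K : ℕ} (A : Matrix (Fin p) (Fin K) ℝ)
    (E : Finset (Fin p × Fin K)) : Matrix (Fin p) (Fin K) ℝ :=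
  fun i j => if (i, j) ∈ E then A i j else 0

/-!
Moving the minimiser `V̂` a small step towards `V*` and letting the step size tend to zero gives
the first-order condition `λ (‖V̂‖₁ − ‖V*‖₁) ≤ ⟨Σ̂ V̂ − Û, V* − V̂⟩`. For `Δ = V̂ − V*` this reads
`tr(Δᵀ Σ̂ Δ) ≤ −⟨Σ̂ V* − Û, Δ⟩ + λ (‖V*‖₁ − ‖V̂‖₁) ≤ (3λ/2) ‖Δ_S‖₁ − (λ/2) ‖Δ_{Sᶜ}‖₁`,
using `‖Σ̂ V* − Û‖_{∞,∞} ≤ λ/2` and that `V*` vanishes off `S`. Since the left side is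
nonnegative, `Δ` lies in the cone `‖Δ_{Sᶜ}‖₁ ≤ 3 ‖Δ_S‖₁`, so the restricted eigenvalue condition
applies with `E = S`; with Cauchy–Schwarz `‖Δ_S‖₁ ≤ √s ‖Δ‖_{1,2}` this gives
`κ* ‖Δ‖_{1,2}² ≤ (3λ/2) √s ‖Δ‖_{1,2}`.
-/

open Matrix Filter Topology

lemma nonneg_of_forall_add_mul_nonneg {c q : ℝ}
    (h : ∀ t : ℝ, 0 < t → t ≤ 1 → 0 ≤ c + t * q) : 0 ≤ c := by
  have hlim : Tendsto (fun t : ℝ => c + t * q) (𝓝[>] 0) (𝓝 c) := by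
    have hcont : Continuous fun t : ℝ => c + t * q := by fun_prop
    exact (hcont.tendsto' 0 c (by simp)).mono_left nhdsWithin_le_nhds
  refine ge_of_tendsto hlim ?_
  filter_upwards [Ioc_mem_nhdsGT (zero_lt_one' ℝ)] with t ht using h t ht.1 ht.2

lemma le_div_of_mul_sq_le_mul {κ c x : ℝ} (hκ : 0 < κ) (hc : 0 ≤ c) (hx : 0 ≤ x)
    (h : κ * x ^ 2 ≤ c * x) : x ≤ c / κ := by
  rw [le_div_iff₀ hκ]
  rcases hx.eq_or_lt with rfl | hx
  · simpa using hc
  · nlinarith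

section TraceForm

variable {m n : Type*} [Fintype m] [Fintype n]

lemma trace_transpose_mul_comm (A B : Matrix m n ℝ) : trace (Aᵀ * B) = trace (Bᵀ * A) := by
  rw [← trace_transpose, transpose_mul, transpose_transpose]

lemma trace_transpose_mul_eq_sum (A B : Matrix m n ℝ) :
    trace (Aᵀ * B) = ∑ i, ∑ j, A i j * B i j := by
  simp only [trace, diag, mul_apply, transpose_apply]
  exact Finset.sum_comm

lemma trace_transpose_mul_mul_nonneg {S : Matrix m m ℝ} (hS : S.PosSemidef) (A : Matrix m n ℝ) :
    0 ≤ trace (Aᵀ * S * A) := by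
  simpa using (hS.conjTranspose_mul_mul_same A).trace_nonneg

end TraceForm

section EntrywiseNorms

variable {p K : ℕ}

lemma norm11_nonneg (A : Matrix (Fin p) (Fin K) ℝ) : 0 ≤ norm11 A := by
  unfold norm11; positivity

lemma norm11_zero : norm11 (0 : Matrix (Fin p) (Fin K) ℝ) = 0 := by
  simp [norm11]

lemma norm11_add_le (A B : Matrix (Fin p) (Fin K) ℝ) : norm11 (A + B) ≤ norm11 A + norm11 B := by
  simp only [norm11, ← Finset.sum_add_distrib]
  gcongr with i _ j _
  exact abs_add_le _ _

lemma norm11_sub_le (A B : Matrix (Fin p) (Fin K) ℝ) : norm11 (A - B) ≤ norm11 A + norm11 B := by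
  simp only [norm11, ← Finset.sum_add_distrib]
  gcongr with i _ j _
  exact abs_sub _ _

lemma norm11_smul (c : ℝ) (A : Matrix (Fin p) (Fin K) ℝ) : norm11 (c • A) = |c| * norm11 A := by
  simp [norm11, Finset.mul_sum, abs_mul]

lemma restrictF_sub (A B : Matrix (Fin p) (Fin K) ℝ) (E : Finset (Fin p × Fin K)) :
    restrictF (A - B) E = restrictF A E - restrictF B E := by
  ext i j; by_cases h : (i, j) ∈ E <;> simp [restrictF, h]

lemma norm11_eq_restrictF_add_restrictF_compl (A : Matrix (Fin p) (Fin K) ℝ)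
    (E : Finset (Fin p × Fin K)) :
    norm11 A = norm11 (restrictF A E) + norm11 (restrictF A Eᶜ) := by
  simp only [norm11, restrictF, ← Finset.sum_add_distrib]
  refine Finset.sum_congr rfl fun i _ => Finset.sum_congr rfl fun j _ => ?_
  by_cases h : (i, j) ∈ E <;> simp [h]

lemma norm11_restrictF_eq_sum (A : Matrix (Fin p) (Fin K) ℝ) (E : Finset (Fin p × Fin K)) :
    norm11 (restrictF A E) = ∑ q ∈ E, |A q.1 q.2| := by
  rw [norm11, ← Fintype.sum_prod_type', ← Finset.sum_subset E.subset_univ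
    (fun q _ hq => by simp [restrictF, hq])]
  exact Finset.sum_congr rfl fun q hq => by simp [restrictF, hq]

lemma norm11_sub_norm11_le_of_support {V W : Matrix (Fin p) (Fin K) ℝ}
    {S : Finset (Fin p × Fin K)} (hV : ∀ q ∉ S, V q.1 q.2 = 0) :
    norm11 V - norm11 W ≤ norm11 (restrictF (W - V) S) - norm11 (restrictF (W - V) Sᶜ) := by
  have hVoff : restrictF V Sᶜ = 0 := by
    ext i j
    by_cases h : (i, j) ∈ S <;> simp [restrictF, h, hV (i, j)]
  have hon : restrictF V S = restrictF W S - restrictF (W - V) S := by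
    rw [restrictF_sub, sub_sub_cancel]
  have hoff : restrictF (W - V) Sᶜ = restrictF W Sᶜ := by
    rw [restrictF_sub, hVoff, sub_zero]
  rw [norm11_eq_restrictF_add_restrictF_compl V S, norm11_eq_restrictF_add_restrictF_compl W S,
    hVoff, norm11_zero, hon, hoff]
  linarith [norm11_sub_le (restrictF W S) (restrictF (W - V) S)]

lemma trace_transpose_mul_le_mul_norm11 {G : Matrix (Fin p) (Fin K) ℝ} {c : ℝ}
    (hG : ∀ i j, |G i j| ≤ c) (A : Matrix (Fin p) (Fin K) ℝ) :
    |trace (Gᵀ * A)| ≤ c * norm11 A := by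
  rw [trace_transpose_mul_eq_sum, norm11, Finset.mul_sum]
  refine (Finset.abs_sum_le_sum_abs _ _).trans (Finset.sum_le_sum fun i _ => ?_)
  rw [Finset.mul_sum]
  refine (Finset.abs_sum_le_sum_abs _ _).trans (Finset.sum_le_sum fun j _ => ?_)
  rw [abs_mul]
  exact mul_le_mul_of_nonneg_right (hG i j) (abs_nonneg _)

lemma norm12_nonneg (A : Matrix (Fin p) (Fin K) ℝ) : 0 ≤ norm12 A :=
  Finset.sum_nonneg fun _ _ => Real.sqrt_nonneg _

lemma frobNorm_le_norm12 (A : Matrix (Fin p) (Fin K) ℝ) : frobNorm A ≤ norm12 A := by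
  rw [frobNorm, Real.sqrt_le_left (norm12_nonneg A), Finset.sum_comm, norm12]
  calc ∑ j, ∑ i, A i j ^ 2 = ∑ j, √(∑ i, A i j ^ 2) ^ 2 :=
        Finset.sum_congr rfl fun j _ => (Real.sq_sqrt (by positivity)).symm
    _ ≤ (∑ j, √(∑ i, A i j ^ 2)) ^ 2 :=
        Finset.sum_sq_le_sq_sum_of_nonneg fun j _ => Real.sqrt_nonneg _

lemma norm11_restrictF_le_sqrt_card_mul_norm12 (A : Matrix (Fin p) (Fin K) ℝ)
    (E : Finset (Fin p × Fin K)) :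
    norm11 (restrictF A E) ≤ √(E.card : ℝ) * norm12 A := by
  have hE : √(∑ q ∈ E, |A q.1 q.2| ^ 2) ≤ frobNorm A := by
    rw [frobNorm, ← Fintype.sum_prod_type' (fun i j => A i j ^ 2)]
    gcongr
    simpa only [sq_abs] using Finset.sum_le_sum_of_subset_of_nonneg E.subset_univ
      fun q _ _ => sq_nonneg (A q.1 q.2)
  calc norm11 (restrictF A E) = ∑ q ∈ E, 1 * |A q.1 q.2| := by
        simp [norm11_restrictF_eq_sum]
    _ ≤ √(∑ q ∈ E, (1 : ℝ) ^ 2) * √(∑ q ∈ E, |A q.1 q.2| ^ 2) :=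
        Real.sum_mul_le_sqrt_mul_sqrt _ _ _
    _ ≤ √(E.card : ℝ) * norm12 A := by
        simp only [one_pow, Finset.sum_const, nsmul_eq_mul, mul_one]
        gcongr
        exact hE.trans (frobNorm_le_norm12 A)

end EntrywiseNorms

/-- The loss `L` of the paper, with `R = Σ̂^{1/2}`. -/
noncomputable def leastSquaresLoss {p K : ℕ} (R : Matrix (Fin p) (Fin p) ℝ)
    (U V : Matrix (Fin p) (Fin K) ℝ) : ℝ :=
  (1 / 2) * frobNorm (R⁻¹ * U - R * V) ^ 2

noncomputable def lassoObjective {p K : ℕ} (R : Matrix (Fin p) (Fin p) ℝ)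
    (U : Matrix (Fin p) (Fin K) ℝ) (lam : ℝ) (V : Matrix (Fin p) (Fin K) ℝ) : ℝ :=
  leastSquaresLoss R U V + lam * norm11 V

section Lasso

variable {p K : ℕ}

lemma sq_frobNorm_eq_trace (A : Matrix (Fin p) (Fin K) ℝ) : frobNorm A ^ 2 = trace (Aᵀ * A) := by
  rw [frobNorm, Real.sq_sqrt (by positivity), trace_transpose_mul_eq_sum]
  simp only [sq]

lemma sq_frobNorm_sub_smul (A B : Matrix (Fin p) (Fin K) ℝ) (t : ℝ) :
    frobNorm (A - t • B) ^ 2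
      = frobNorm A ^ 2 - 2 * t * trace (Aᵀ * B) + t ^ 2 * frobNorm B ^ 2 := by
  simp only [sq_frobNorm_eq_trace, transpose_sub, transpose_smul, Matrix.sub_mul, Matrix.mul_sub,
    Matrix.smul_mul, Matrix.mul_smul, trace_sub, trace_smul, smul_eq_mul,
    trace_transpose_mul_comm B A]
  ring

variable {R : Matrix (Fin p) (Fin p) ℝ} {U : Matrix (Fin p) (Fin K) ℝ}

lemma leastSquaresLoss_add_smul (hRs : R.IsSymm) (hRu : IsUnit R)
    (V D : Matrix (Fin p) (Fin K) ℝ) (t : ℝ) :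
    leastSquaresLoss R U (V + t • D) = leastSquaresLoss R U V
      + t * trace ((R * R * V - U)ᵀ * D) + t ^ 2 / 2 * frobNorm (R * D) ^ 2 := by
  have hresid : R⁻¹ * U - R * (V + t • D) = (R⁻¹ * U - R * V) - t • (R * D) := by
    rw [Matrix.mul_add, Matrix.mul_smul]; abel
  have hcross : trace ((R⁻¹ * U - R * V)ᵀ * (R * D)) = - trace ((R * R * V - U)ᵀ * D) := by
    have hRA : R * (R⁻¹ * U - R * V) = -(R * R * V - U) := by
      rw [Matrix.mul_sub, ← Matrix.mul_assoc,
        mul_nonsing_inv _ ((isUnit_iff_isUnit_det R).mp hRu), Matrix.one_mul, ← Matrix.mul_assoc,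
        neg_sub]
    rw [← Matrix.mul_assoc, ← hRs.eq, ← transpose_mul, hRs.eq, hRA, transpose_neg, Matrix.neg_mul,
      trace_neg]
  rw [leastSquaresLoss, leastSquaresLoss, hresid, sq_frobNorm_sub_smul, hcross]
  ring

lemma lam_mul_norm11_sub_le_of_isMin (hRs : R.IsSymm) (hRu : IsUnit R) {lam : ℝ} (hlam : 0 ≤ lam)
    {Vhat : Matrix (Fin p) (Fin K) ℝ}
    (hmin : ∀ V, lassoObjective R U lam Vhat ≤ lassoObjective R U lam V)
    (W : Matrix (Fin p) (Fin K) ℝ) :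
    lam * (norm11 Vhat - norm11 W) ≤ trace ((R * R * Vhat - U)ᵀ * (W - Vhat)) := by
  refine sub_nonneg.mp (nonneg_of_forall_add_mul_nonneg
    (q := frobNorm (R * (W - Vhat)) ^ 2 / 2) fun t ht0 ht1 => ?_)
  have hconv : norm11 (Vhat + t • (W - Vhat)) ≤ (1 - t) * norm11 Vhat + t * norm11 W := by
    calc norm11 (Vhat + t • (W - Vhat)) = norm11 ((1 - t) • Vhat + t • W) := by
          congr 1; module
      _ ≤ (1 - t) * norm11 Vhat + t * norm11 W := by
          refine (norm11_add_le _ _).trans_eq ?_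
          rw [norm11_smul, norm11_smul, abs_of_nonneg (sub_nonneg.mpr ht1), abs_of_pos ht0]
  have hle := hmin (Vhat + t • (W - Vhat))
  rw [lassoObjective, lassoObjective, leastSquaresLoss_add_smul hRs hRu] at hle
  have hlam_conv := mul_le_mul_of_nonneg_left hconv hlam
  have hprod : 0 ≤ t * (trace ((R * R * Vhat - U)ᵀ * (W - Vhat)) - lam * (norm11 Vhat - norm11 W)
      + t * (frobNorm (R * (W - Vhat)) ^ 2 / 2)) := by
    linarith
  exact nonneg_of_mul_nonneg_right hprod ht0

lemma trace_transpose_mul_mul_le_of_isMin (hRs : R.IsSymm) (hRu : IsUnit R) {lam : ℝ}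
    (hlam : 0 ≤ lam) {Vhat : Matrix (Fin p) (Fin K) ℝ}
    (hmin : ∀ V, lassoObjective R U lam Vhat ≤ lassoObjective R U lam V)
    (W : Matrix (Fin p) (Fin K) ℝ) :
    trace ((Vhat - W)ᵀ * (R * R) * (Vhat - W))
      ≤ -trace ((R * R * W - U)ᵀ * (Vhat - W)) + lam * (norm11 W - norm11 Vhat) := by
  have h := lam_mul_norm11_sub_le_of_isMin hRs hRu hlam hmin W
  have hgrad : R * R * Vhat - U = (R * R * W - U) + R * R * (Vhat - W) := by
    rw [Matrix.mul_sub]; abel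
  rw [hgrad, ← neg_sub Vhat W, transpose_add, Matrix.add_mul, Matrix.mul_neg, Matrix.mul_neg,
    trace_add, trace_neg, trace_neg, trace_transpose_mul_comm (R * R * (Vhat - W)),
    ← Matrix.mul_assoc] at h
  linarith

end Lasso

theorem stmt15_general
    (p K : ℕ) (Sh R : Matrix (Fin p) (Fin p) ℝ)
    (hSh : Sh.PosDef) (hR : R.PosDef) (hRR : R * R = Sh)
    (Uh : Matrix (Fin p) (Fin K) ℝ)
    (lam : ℝ) (hlam : 0 < lam)
    (Vstar : Matrix (Fin p) (Fin K) ℝ)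
    (S : Finset (Fin p × Fin K)) (hS : ∀ q : Fin p × Fin K, q ∈ S ↔ Vstar q.1 q.2 ≠ 0)
    (s : ℕ) (hs : s = S.card)
    (hgrad : ∀ i j, |(Sh * Vstar - Uh) i j| ≤ lam / 2)
    (κstar : ℝ) (hκpos : 0 < κstar)
    (hRE : ∀ V : Matrix (Fin p) (Fin K) ℝ,
      (∃ E : Finset (Fin p × Fin K), S ⊆ E ∧ E.card ≤ 2 * s ∧
        norm11 (restrictF V Eᶜ) ≤ 3 * norm11 (restrictF V E)) →
      κstar * (norm12 V) ^ 2 ≤ Matrix.trace (Vᵀ * Sh * V))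
    (Vhat : Matrix (Fin p) (Fin K) ℝ)
    (hmin : ∀ V : Matrix (Fin p) (Fin K) ℝ,
      (1 / 2) * (frobNorm (R⁻¹ * Uh - R * Vhat)) ^ 2 + lam * norm11 Vhat
        ≤ (1 / 2) * (frobNorm (R⁻¹ * Uh - R * V)) ^ 2 + lam * norm11 V) :
    norm12 (Vhat - Vstar) ≤ 3 * lam * Real.sqrt s / (2 * κstar) := by
  set Δ := Vhat - Vstar
  set a := norm11 (restrictF Δ S)
  set b := norm11 (restrictF Δ Sᶜ)
  have hRs : R.IsSymm := by simpa [conjTranspose_eq_transpose_of_trivial] using hR.isHermitian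
  have hbasic := trace_transpose_mul_mul_le_of_isMin hRs hR.isUnit hlam.le hmin Vstar
  rw [hRR] at hbasic
  have hcross : -trace ((Sh * Vstar - Uh)ᵀ * Δ) ≤ lam / 2 * (a + b) := by
    rw [← norm11_eq_restrictF_add_restrictF_compl]
    exact (neg_le_abs _).trans (trace_transpose_mul_le_mul_norm11 hgrad Δ)
  have hsupp : norm11 Vstar - norm11 Vhat ≤ a - b :=
    norm11_sub_norm11_le_of_support fun q hq => not_not.mp (mt (hS q).mpr hq)
  have hquad : trace (Δᵀ * Sh * Δ) ≤ 3 * lam / 2 * a - lam / 2 * b := by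
    nlinarith [mul_le_mul_of_nonneg_left hsupp hlam.le]
  have hcone : b ≤ 3 * a := by
    nlinarith [trace_transpose_mul_mul_nonneg hSh.posSemidef Δ]
  have hRE_Δ := hRE Δ ⟨S, subset_rfl, by omega, hcone⟩
  have hCS : a ≤ √(s : ℝ) * norm12 Δ := hs ▸ norm11_restrictF_le_sqrt_card_mul_norm12 Δ S
  refine le_div_of_mul_sq_le_mul (by positivity) (by positivity) (norm12_nonneg Δ) ?_
  nlinarith [norm11_nonneg (restrictF Δ Sᶜ)]

/-- Theorem 2: under the restricted eigenvalue condition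
`κ₋(K, 2s, 3) ≥ κ* > 0` and the deviation bound `‖Σ̂ V* − Û‖_{∞,∞} ≤ λ/2`, any global
minimizer `V̂` of `V ↦ (1/2)‖Σ̂^{-1/2} Û − Σ̂^{1/2} V‖_F² + λ‖V‖_{1,1}` satisfies
`‖V̂ − V*‖_{1,2} ≤ 3λ√s/(2κ*)`, where `S` is the support of `V*`, of size `s ≥ 1`.
Here `R` is the symmetric positive definite square root of `Σ̂`. -/
theorem stmt15
    (p K : ℕ) (Sh R : Matrix (Fin p) (Fin p) ℝ)
    (hSh : Sh.PosDef) (hR : R.PosDef) (hRR : R * R = Sh)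
    (Uh : Matrix (Fin p) (Fin K) ℝ)
    (lam : ℝ) (hlam : 0 < lam)
    (Vstar : Matrix (Fin p) (Fin K) ℝ)
    (S : Finset (Fin p × Fin K)) (hS : ∀ q : Fin p × Fin K, q ∈ S ↔ Vstar q.1 q.2 ≠ 0)
    (s : ℕ) (hs : s = S.card) (hs1 : 1 ≤ s)
    (hgrad : ∀ i j, |(Sh * Vstar - Uh) i j| ≤ lam / 2)
    (κstar : ℝ) (hκpos : 0 < κstar)
    (hRE : ∀ V : Matrix (Fin p) (Fin K) ℝ,
      (∃ E : Finset (Fin p × Fin K), S ⊆ E ∧ E.card ≤ 2 * s ∧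
        norm11 (restrictF V Eᶜ) ≤ 3 * norm11 (restrictF V E)) →
      κstar * (norm12 V) ^ 2 ≤ Matrix.trace (Vᵀ * Sh * V))
    (Vhat : Matrix (Fin p) (Fin K) ℝ)
    (hmin : ∀ V : Matrix (Fin p) (Fin K) ℝ,
      (1 / 2) * (frobNorm (R⁻¹ * Uh - R * Vhat)) ^ 2 + lam * norm11 Vhat
        ≤ (1 / 2) * (frobNorm (R⁻¹ * Uh - R * V)) ^ 2 + lam * norm11 V) :
    norm12 (Vhat - Vstar) ≤ 3 * lam * Real.sqrt s / (2 * κstar) :=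
  stmt15_general p K Sh R hSh hR hRR Uh lam hlam Vstar S hS s hs hgrad κstar hκpos hRE Vhat hmin
end
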